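/- Let B ∈ ℂ^{n×k} have rank k with unique orthonormal polar factor P_*, and let P ∈ ℂ^{n×k} have orthonormal columns. Then ‖sin Θ(R(P), R(P_*))‖_F ≤ √(2(‖B‖_tr − ‖Pᴴ B‖_tr) / σ_min(B)). -/

import Mathlib

open scoped ComplexOrder
open Matrix

/-- The tuple `f` rearranged into decreasing order; `sortedDesc f 0` is the largest entry. -/
noncomputable def sortedDesc {m : ℕ} (f : Fin m → ℝ) : Fin m → ℝ :=
  fun i => (f ∘ Tuple.sort f) i.rev

/-- The singular values of a complex matrix, in decreasing order. -/
noncomputable def sv {n k : ℕ} (B : Matrix (Fin n) (Fin k) ℂ) : Fin k → ℝ :=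
  sortedDesc fun i =>
    Real.sqrt ((Matrix.posSemidef_conjTranspose_mul_self B).isHermitian.eigenvalues i)

/-- The trace (nuclear) norm: the sum of the singular values. -/
noncomputable def trNorm {n k : ℕ} (B : Matrix (Fin n) (Fin k) ℂ) : ℝ := ∑ i, sv B i

/-- The Frobenius norm. -/
noncomputable def frobNorm {n k : ℕ} (A : Matrix (Fin n) (Fin k) ℂ) : ℝ :=
  Real.sqrt (∑ i, ∑ j, ‖A i j‖ ^ 2)

/-- `‖sin Θ(R(X), R(Y))‖_F` where `Θ` is the diagonal matrix of canonical angles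
`θ_i = arccos σ_i(Xᴴ Y)` between the column spaces of `X` and `Y`. -/
noncomputable def sinThetaF {n k : ℕ} (X Y : Matrix (Fin n) (Fin k) ℂ) : ℝ :=
  Real.sqrt (∑ i, Real.sin (Real.arccos (sv (Xᴴ * Y) i)) ^ 2)

/-- The smallest singular value. -/
noncomputable def smin {n k : ℕ} (B : Matrix (Fin n) (Fin k) ℂ) : ℝ := ⨅ i, sv B i

/-- The spectral norm (largest singular value). -/
noncomputable def s2norm {n k : ℕ} (B : Matrix (Fin n) (Fin k) ℂ) : ℝ := ⨆ i, sv B i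

/-- The square root of a positive semidefinite matrix, as `Matrix.PosSemidef.sqrt` was defined
in the older Mathlib (that definition is gone). -/
noncomputable def psdSqrt {k : ℕ} {A : Matrix (Fin k) (Fin k) ℂ} (hA : A.PosSemidef) :
    Matrix (Fin k) (Fin k) ℂ :=
  hA.isHermitian.eigenvectorUnitary.1 * diagonal ((↑) ∘ (√·) ∘ hA.isHermitian.eigenvalues) *
    (star hA.isHermitian.eigenvectorUnitary : Matrix (Fin k) (Fin k) ℂ)

/-- The orthonormal polar factor `B (Bᴴ B)^{-1/2}` (for `B` of full column rank). -/
noncomputable def polarFactor {n k : ℕ} (B : Matrix (Fin n) (Fin k) ℂ) :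
    Matrix (Fin n) (Fin k) ℂ :=
  B * (psdSqrt (Matrix.posSemidef_conjTranspose_mul_self B))⁻¹

/-- Eigenvalues of a Hermitian matrix, in decreasing order. -/
noncomputable def eigsDesc {n : ℕ} {H : Matrix (Fin n) (Fin n) ℂ} (hH : H.IsHermitian) :
    Fin n → ℝ :=
  sortedDesc hH.eigenvalues

/-!
Write `H = (Bᴴ B)^{1/2}`, so that `B = P_* H`, and put `A = Pᴴ P_*`. Then `Pᴴ B = A H`,
`1 - AᴴA ⪰ 0`, and `‖sin Θ‖_F² = k - tr(AᴴA)`. Choose a unitary `Q` with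
`tr(Qᴴ Pᴴ B) = ‖Pᴴ B‖_tr`. Both `2 - QᴴA - AᴴQ = (Q - A)ᴴ(Q - A) + (1 - AᴴA)` and
`H - σ_min(B)` are positive semidefinite, so the trace of their product is nonnegative:
`σ_min(B) (k - Re tr(QᴴA)) ≤ ‖B‖_tr - ‖Pᴴ B‖_tr`. Finally `‖Q - A‖_F² ≥ 0` gives
`k - tr(AᴴA) ≤ 2 (k - Re tr(QᴴA))`.
-/

theorem sum_sortedDesc {m : ℕ} (h : ℝ → ℝ) (f : Fin m → ℝ) :
    ∑ i, h (sortedDesc f i) = ∑ i, h (f i) :=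
  Equiv.sum_comp (Fin.revPerm.trans (Tuple.sort f)) (fun j => h (f j))

theorem exists_sortedDesc_eq {m : ℕ} (f : Fin m → ℝ) (j : Fin m) : ∃ i, sortedDesc f i = f j :=
  ⟨((Tuple.sort f)⁻¹ j).rev, by simp [sortedDesc]⟩

theorem OrthonormalBasis.exists_sqrt_smul_eq_of_inner_eq_ite {𝕜 E ι : Type*} [RCLike 𝕜]
    [NormedAddCommGroup E] [InnerProductSpace 𝕜 E] [FiniteDimensional 𝕜 E] [Fintype ι]
    [DecidableEq ι] (hcard : Module.finrank 𝕜 E = Fintype.card ι) {w : ι → E} {d : ι → ℝ}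
    (hw : ∀ i j, inner 𝕜 (w i) (w j) = if i = j then (d i : 𝕜) else 0) :
    ∃ c : OrthonormalBasis ι 𝕜 E, ∀ j, w j = (√(d j) : 𝕜) • c j := by
  have hnorm : ∀ j, ‖w j‖ ^ 2 = d j := fun j => by
    rw [← inner_self_eq_norm_sq (𝕜 := 𝕜), hw, if_pos rfl, RCLike.ofReal_re]
  have hsqrt : ∀ j, (√(d j) : 𝕜) * √(d j) = d j := fun j => by
    rw [← RCLike.ofReal_mul, Real.mul_self_sqrt (hnorm j ▸ by positivity)]
  set s : Set ι := {j | d j ≠ 0}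
  have hsqrt_ne : ∀ j ∈ s, (√(d j) : 𝕜) ≠ 0 := fun j hj h => hj (by
    rw [← RCLike.ofReal_inj (K := 𝕜), ← hsqrt, h, zero_mul, RCLike.ofReal_zero])
  set u : ι → E := fun j => (√(d j) : 𝕜)⁻¹ • w j
  have hu : Orthonormal 𝕜 (s.domRestrict u) := by
    rw [orthonormal_iff_ite]
    rintro ⟨i, hi⟩ ⟨j, hj⟩
    simp only [Set.domRestrict_apply, u, inner_smul_left, inner_smul_right, hw,
      Subtype.mk.injEq, map_inv₀, RCLike.conj_ofReal]
    split_ifs with hij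
    · subst hij
      field_simp [hsqrt_ne i hi]
      rw [sq, hsqrt]
    · simp
  obtain ⟨c, hc⟩ := hu.exists_orthonormalBasis_extension_of_card_eq hcard
  refine ⟨c, fun j => ?_⟩
  by_cases hj : j ∈ s
  · rw [hc j hj, smul_smul, mul_inv_cancel₀ (hsqrt_ne j hj), one_smul]
  · have hd : d j = 0 := not_not.mp hj
    have hw0 : w j = 0 := by rw [← norm_eq_zero, ← sq_eq_zero_iff, hnorm, hd]
    simp [hw0, hd]

namespace Matrix

theorem IsHermitian.eigenvalues_le_one {𝕜 n : Type*} [RCLike 𝕜] [Fintype n] [DecidableEq n]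
    {S : Matrix n n 𝕜} (hS : S.IsHermitian) (h : (1 - S).PosSemidef) (i : n) :
    hS.eigenvalues i ≤ 1 := by
  set v := ⇑(hS.eigenvectorBasis i)
  have hv : star v ⬝ᵥ v = 1 := by
    rw [dotProduct_comm, ← EuclideanSpace.inner_eq_star_dotProduct, inner_self_eq_norm_sq_to_K,
      hS.eigenvectorBasis.orthonormal.1 i]
    simp
  have := h.re_dotProduct_nonneg v
  rw [sub_mulVec, one_mulVec, dotProduct_sub, map_sub, hv, ← hS.eigenvalues_eq] at this
  simpa using this

theorem re_trace_conjTranspose_mul_comm {m n : Type*} [Fintype m] [Fintype n]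
    (X Y : Matrix m n ℂ) : (Xᴴ * Y).trace.re = (Yᴴ * X).trace.re := by
  rw [← conjTranspose_conjTranspose X, ← conjTranspose_mul, trace_conjTranspose,
    conjTranspose_conjTranspose, Complex.star_def, Complex.conj_re]

theorem posSemidef_one_sub_conjTranspose_mul_self_of_orthonormal {m n k : Type*} [Fintype m]
    [Fintype n] [Fintype k] [DecidableEq m] [DecidableEq n] [DecidableEq k] {X : Matrix m k ℂ}
    {Y : Matrix m n ℂ} (hX : Xᴴ * X = 1) (hY : Yᴴ * Y = 1) :
    (1 - (Xᴴ * Y)ᴴ * (Xᴴ * Y)).PosSemidef := by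
  have hproj : (1 - X * Xᴴ)ᴴ * (1 - X * Xᴴ) = 1 - X * Xᴴ := by
    simp only [conjTranspose_sub, conjTranspose_one, conjTranspose_mul, conjTranspose_conjTranspose,
      Matrix.sub_mul, Matrix.mul_sub, Matrix.one_mul, Matrix.mul_one, Matrix.mul_assoc,
      ← Matrix.mul_assoc Xᴴ X, hX]
    abel
  have hfactor :
      1 - (Xᴴ * Y)ᴴ * (Xᴴ * Y) = ((1 - X * Xᴴ) * Y)ᴴ * ((1 - X * Xᴴ) * Y) := calc
    1 - (Xᴴ * Y)ᴴ * (Xᴴ * Y) = Yᴴ * (1 - X * Xᴴ) * Y := by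
        simp only [conjTranspose_mul, conjTranspose_conjTranspose, Matrix.mul_sub, Matrix.sub_mul,
          Matrix.mul_one, hY, Matrix.mul_assoc]
    _ = ((1 - X * Xᴴ) * Y)ᴴ * ((1 - X * Xᴴ) * Y) := by
        rw [conjTranspose_mul, Matrix.mul_assoc Yᴴ (1 - X * Xᴴ)ᴴ,
          ← Matrix.mul_assoc (1 - X * Xᴴ)ᴴ, hproj, Matrix.mul_assoc]
  exact hfactor ▸ posSemidef_conjTranspose_mul_self _

theorem exists_unitary_mul_diagonal_sqrt {ι : Type*} [Fintype ι] [DecidableEq ι]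
    {W : Matrix ι ι ℂ} {d : ι → ℝ} (hW : Wᴴ * W = diagonal fun j => (d j : ℂ)) :
    ∃ U ∈ unitaryGroup ι ℂ, W = U * diagonal fun j => (√(d j) : ℂ) := by
  set w : ι → EuclideanSpace ℂ ι := fun j => WithLp.toLp 2 fun i => W i j
  have hw : ∀ i j, inner ℂ (w i) (w j) = if i = j then (d i : ℂ) else 0 := fun i j => by
    have hWij := congrFun (congrFun hW i) j
    rw [diagonal_apply, mul_apply] at hWij
    rw [← hWij, PiLp.inner_apply]
    simp [w, mul_comm]
  obtain ⟨c, hc⟩ := OrthonormalBasis.exists_sqrt_smul_eq_of_inner_eq_ite (by simp) hw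
  refine ⟨(EuclideanSpace.basisFun ι ℂ).toBasis.toMatrix c.toBasis,
    (EuclideanSpace.basisFun ι ℂ).toMatrix_orthonormalBasis_mem_unitary c, ?_⟩
  ext i j
  simpa [Module.Basis.toMatrix_apply, w, mul_comm] using congrArg (· i) (hc j)

theorem posDef_conjTranspose_mul_self_of_rank_eq {n k : ℕ} {B : Matrix (Fin n) (Fin k) ℂ}
    (h : B.rank = k) : (Bᴴ * B).PosDef := by
  have hrange : LinearMap.range (Bᴴ * B).mulVecLin = ⊤ := by
    apply Submodule.eq_top_of_finrank_eq
    rw [← rank, rank_conjTranspose_mul_self, h, Module.finrank_fin_fun]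
  have hunit : IsUnit (Bᴴ * B) :=
    mulVec_surjective_iff_isUnit.mp (LinearMap.range_eq_top.mp hrange)
  exact (posSemidef_conjTranspose_mul_self B).posDef_iff_isUnit.mpr hunit

end Matrix

section PsdSqrt

variable {m : ℕ}

theorem psdSqrt_mul_self {S : Matrix (Fin m) (Fin m) ℂ} (hS : S.PosSemidef) :
    psdSqrt hS * psdSqrt hS = S := by
  have hU := Unitary.coe_star_mul_self hS.isHermitian.eigenvectorUnitary
  conv_rhs => rw [hS.isHermitian.spectral_theorem, Unitary.conjStarAlgAut_apply]
  simp only [psdSqrt, Matrix.mul_assoc]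
  rw [← Matrix.mul_assoc (star _ : Matrix (Fin m) (Fin m) ℂ) _ (diagonal _ * _), hU,
    Matrix.one_mul, ← Matrix.mul_assoc (diagonal _), diagonal_mul_diagonal]
  congr 3
  funext i
  simp [← Complex.ofReal_mul, Real.mul_self_sqrt (hS.eigenvalues_nonneg i)]

theorem posSemidef_psdSqrt {S : Matrix (Fin m) (Fin m) ℂ} (hS : S.PosSemidef) :
    (psdSqrt hS).PosSemidef :=
  (posSemidef_diagonal_iff.mpr fun _ =>
    Complex.zero_le_real.mpr (Real.sqrt_nonneg _)).mul_mul_conjTranspose_same _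

theorem trace_psdSqrt {S : Matrix (Fin m) (Fin m) ℂ} (hS : S.PosSemidef) :
    (psdSqrt hS).trace = ∑ i, (√(hS.isHermitian.eigenvalues i) : ℂ) := by
  rw [psdSqrt, trace_mul_cycle, Unitary.coe_star_mul_self, Matrix.one_mul, trace_diagonal]
  rfl

theorem posSemidef_psdSqrt_sub_smul {S : Matrix (Fin m) (Fin m) ℂ} (hS : S.PosSemidef) {c : ℝ}
    (hc : ∀ i, c ≤ √(hS.isHermitian.eigenvalues i)) :
    (psdSqrt hS - (c : ℂ) • 1).PosSemidef := by
  set U : Matrix (Fin m) (Fin m) ℂ := hS.isHermitian.eigenvectorUnitary.1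
  have hUU : U * star U = 1 := Unitary.coe_mul_star_self _
  have hdiff : psdSqrt hS - (c : ℂ) • 1 =
      U * diagonal (fun i => ((√(hS.isHermitian.eigenvalues i) - c : ℝ) : ℂ)) * star U := by
    have hD : diagonal (fun i => ((√(hS.isHermitian.eigenvalues i) - c : ℝ) : ℂ)) =
        diagonal ((↑) ∘ (√·) ∘ hS.isHermitian.eigenvalues) - (c : ℂ) • 1 := by
      rw [← diagonal_one, ← diagonal_smul, diagonal_sub]
      simp
    rw [hD, Matrix.mul_sub, Matrix.sub_mul, Matrix.mul_smul, Matrix.smul_mul, Matrix.mul_one, hUU]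
    rfl
  rw [hdiff]
  refine PosSemidef.mul_mul_conjTranspose_same ?_ U
  exact posSemidef_diagonal_iff.mpr fun i => Complex.zero_le_real.mpr (sub_nonneg.mpr (hc i))

theorem Matrix.PosSemidef.trace_mul_nonneg {X Y : Matrix (Fin m) (Fin m) ℂ} (hX : X.PosSemidef)
    (hY : Y.PosSemidef) : 0 ≤ (X * Y).trace := by
  rw [← psdSqrt_mul_self hX, Matrix.mul_assoc, trace_mul_comm]
  nth_rewrite 2 [← (posSemidef_psdSqrt hX).isHermitian.eq]
  exact (hY.mul_mul_conjTranspose_same _).trace_nonneg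

theorem isUnit_psdSqrt {S : Matrix (Fin m) (Fin m) ℂ} (hS : S.PosDef) :
    IsUnit (psdSqrt hS.posSemidef) :=
  isUnit_of_mul_isUnit_left ((psdSqrt_mul_self hS.posSemidef).symm ▸ hS.isUnit)

end PsdSqrt

section SingularValues

variable {n k : ℕ}

theorem polarFactor_mul_psdSqrt {B : Matrix (Fin n) (Fin k) ℂ} (hB : (Bᴴ * B).PosDef) :
    polarFactor B * psdSqrt (posSemidef_conjTranspose_mul_self B) = B := by
  rw [polarFactor, Matrix.mul_assoc, nonsing_inv_mul _ ((isUnit_psdSqrt hB).map detMonoidHom),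
    Matrix.mul_one]

theorem conjTranspose_polarFactor_mul_self {B : Matrix (Fin n) (Fin k) ℂ}
    (hB : (Bᴴ * B).PosDef) : (polarFactor B)ᴴ * polarFactor B = 1 := by
  have hH : IsUnit (psdSqrt (posSemidef_conjTranspose_mul_self B)).det :=
    (isUnit_psdSqrt hB).map detMonoidHom
  have hHH := psdSqrt_mul_self (posSemidef_conjTranspose_mul_self B)
  have hHerm := (posSemidef_psdSqrt (posSemidef_conjTranspose_mul_self B)).isHermitian.eq
  rw [polarFactor]
  generalize psdSqrt (posSemidef_conjTranspose_mul_self B) = H at hH hHH hHerm ⊢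
  rw [conjTranspose_mul, conjTranspose_nonsing_inv, hHerm, Matrix.mul_assoc,
    ← Matrix.mul_assoc Bᴴ, ← hHH, ← Matrix.mul_assoc, ← Matrix.mul_assoc,
    nonsing_inv_mul _ hH, Matrix.one_mul, mul_nonsing_inv _ hH]

theorem trNorm_eq_sum_sqrt_eigenvalues (B : Matrix (Fin n) (Fin k) ℂ) :
    trNorm B = ∑ i, √((posSemidef_conjTranspose_mul_self B).isHermitian.eigenvalues i) :=
  sum_sortedDesc id _

theorem trace_psdSqrt_conjTranspose_mul_self (B : Matrix (Fin n) (Fin k) ℂ) :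
    (psdSqrt (posSemidef_conjTranspose_mul_self B)).trace = trNorm B := by
  rw [trace_psdSqrt, trNorm_eq_sum_sqrt_eigenvalues, Complex.ofReal_sum]

theorem exists_unitary_trace_eq_trNorm (M : Matrix (Fin k) (Fin k) ℂ) :
    ∃ Q ∈ unitaryGroup (Fin k) ℂ, (Qᴴ * M).trace = trNorm M := by
  set hMM := (posSemidef_conjTranspose_mul_self M).isHermitian
  set V : Matrix (Fin k) (Fin k) ℂ := hMM.eigenvectorUnitary.1
  have hW : (M * V)ᴴ * (M * V) = diagonal fun j => (hMM.eigenvalues j : ℂ) := by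
    have hdiag := hMM.conjStarAlgAut_star_eigenvectorUnitary
    rw [Unitary.conjStarAlgAut_apply, Unitary.coe_star, star_star] at hdiag
    rw [conjTranspose_mul, Matrix.mul_assoc, ← Matrix.mul_assoc Mᴴ, ← Matrix.mul_assoc]
    exact hdiag
  obtain ⟨U, hU, hMV⟩ := exists_unitary_mul_diagonal_sqrt hW
  refine ⟨U * star V, mul_mem hU (Unitary.star_mem hMM.eigenvectorUnitary.2), ?_⟩
  calc ((U * star V)ᴴ * M).trace = (Uᴴ * (M * V)).trace := by
        rw [conjTranspose_mul, star_eq_conjTranspose, conjTranspose_conjTranspose,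
          Matrix.mul_assoc, trace_mul_comm, Matrix.mul_assoc]
    _ = ∑ j, (√(hMM.eigenvalues j) : ℂ) := by
        rw [hMV, ← Matrix.mul_assoc, ← star_eq_conjTranspose, mem_unitaryGroup_iff'.mp hU,
          Matrix.one_mul, trace_diagonal]
    _ = trNorm M := by rw [trNorm_eq_sum_sqrt_eigenvalues, Complex.ofReal_sum]

theorem smin_le_sqrt_eigenvalues (B : Matrix (Fin n) (Fin k) ℂ) (j : Fin k) :
    smin B ≤ √((posSemidef_conjTranspose_mul_self B).isHermitian.eigenvalues j) := by
  obtain ⟨i, hi⟩ := exists_sortedDesc_eq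
    (fun j => √((posSemidef_conjTranspose_mul_self B).isHermitian.eigenvalues j)) j
  exact (ciInf_le (Set.finite_range _).bddBelow i).trans_eq hi

theorem smin_pos {B : Matrix (Fin n) (Fin k) ℂ} [NeZero k] (hB : (Bᴴ * B).PosDef) :
    0 < smin B := by
  have hsv : ∀ i, 0 < sv B i := fun _ => Real.sqrt_pos.mpr (hB.eigenvalues_pos _)
  obtain ⟨i, hi⟩ := Finite.exists_min (sv B)
  exact (hsv i).trans_le (le_ciInf hi)

theorem sum_sin_arccos_sv_sq {M : Matrix (Fin n) (Fin k) ℂ} (hM : (1 - Mᴴ * M).PosSemidef) :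
    ∑ i, Real.sin (Real.arccos (sv M i)) ^ 2 = k - ((Mᴴ * M).trace).re := by
  have hMM := posSemidef_conjTranspose_mul_self M
  have hsin : ∀ j, Real.sin (Real.arccos √(hMM.isHermitian.eigenvalues j)) ^ 2
      = 1 - hMM.isHermitian.eigenvalues j := fun j => by
    rw [Real.sin_arccos, Real.sq_sqrt (hMM.eigenvalues_nonneg j),
      Real.sq_sqrt (sub_nonneg.mpr (hMM.isHermitian.eigenvalues_le_one hM j))]
  rw [sv, sum_sortedDesc (fun x => Real.sin (Real.arccos x) ^ 2),
    Finset.sum_congr rfl fun j _ => hsin j, hMM.isHermitian.trace_eq_sum_eigenvalues,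
    Complex.re_sum, Finset.sum_sub_distrib]
  simp

end SingularValues

section TraceInequalities

variable {k : ℕ} {Q A : Matrix (Fin k) (Fin k) ℂ}

theorem sub_re_trace_le_two_mul (hQ : Q ∈ unitaryGroup (Fin k) ℂ) :
    k - (Aᴴ * A).trace.re ≤ 2 * (k - (Qᴴ * A).trace.re) := by
  have hdist := (posSemidef_conjTranspose_mul_self (Q - A)).trace_nonneg
  rw [conjTranspose_sub, sub_mul, mul_sub, mul_sub, ← star_eq_conjTranspose Q,
    mem_unitaryGroup_iff'.mp hQ, trace_sub, trace_sub, trace_sub] at hdist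
  have hAQ := re_trace_conjTranspose_mul_comm A Q
  have hdist_re := (Complex.le_def.mp hdist).1
  simp only [Complex.zero_re, Complex.sub_re, trace_one, Fintype.card_fin, Complex.natCast_re,
    star_eq_conjTranspose] at hdist_re
  linarith

theorem mul_sub_re_trace_le {H : Matrix (Fin k) (Fin k) ℂ} {c : ℝ}
    (hQ : Q ∈ unitaryGroup (Fin k) ℂ) (hA : (1 - Aᴴ * A).PosSemidef) (hH : H.IsHermitian)
    (hHc : (H - (c : ℂ) • 1).PosSemidef) :
    c * (k - (Qᴴ * A).trace.re) ≤ H.trace.re - (Qᴴ * A * H).trace.re := by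
  have hQQ : Qᴴ * Q = 1 := mem_unitaryGroup_iff'.mp hQ
  have hN : (1 + 1 - Qᴴ * A - Aᴴ * Q).PosSemidef := by
    convert (posSemidef_conjTranspose_mul_self (Q - A)).add hA using 1
    rw [conjTranspose_sub, sub_mul, mul_sub, mul_sub, hQQ]
    abel
  have hAQ := re_trace_conjTranspose_mul_comm A Q
  have hAQH : (Aᴴ * Q * H).trace.re = (Qᴴ * A * H).trace.re := by
    rw [Matrix.mul_assoc, re_trace_conjTranspose_mul_comm, conjTranspose_mul, hH.eq,
      Matrix.mul_assoc, trace_mul_comm]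
  have hprod := (Complex.le_def.mp (hN.trace_mul_nonneg hHc)).1
  simp only [Matrix.sub_mul, Matrix.mul_sub, Matrix.add_mul, Matrix.one_mul, Matrix.mul_smul,
    Matrix.mul_one, trace_sub, trace_add, trace_smul, trace_one, Fintype.card_fin, smul_eq_mul,
    Complex.zero_re, Complex.sub_re, Complex.add_re, Complex.re_ofReal_mul,
    Complex.natCast_re, hAQ, hAQH] at hprod
  linarith

end TraceInequalities

theorem sinTheta_le_eps_trNorm_general {n k : ℕ} (B P : Matrix (Fin n) (Fin k) ℂ)
    (hrank : B.rank = k) (hP : Pᴴ * P = 1) :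
    sinThetaF P (polarFactor B) ≤
      Real.sqrt (2 * (trNorm B - trNorm (Pᴴ * B)) / smin B) := by
  rcases k.eq_zero_or_pos with rfl | hk
  · simp [sinThetaF]
  have : NeZero k := ⟨hk.ne'⟩
  have hB := posDef_conjTranspose_mul_self_of_rank_eq hrank
  have hBB := posSemidef_conjTranspose_mul_self B
  set A := Pᴴ * polarFactor B
  have hA : (1 - Aᴴ * A).PosSemidef :=
    posSemidef_one_sub_conjTranspose_mul_self_of_orthonormal hP
      (conjTranspose_polarFactor_mul_self hB)
  obtain ⟨Q, hQ, hQtr⟩ := exists_unitary_trace_eq_trNorm (Pᴴ * B)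
  have hPB : Pᴴ * B = A * psdSqrt hBB := by rw [Matrix.mul_assoc, polarFactor_mul_psdSqrt hB]
  have hfrob := sub_re_trace_le_two_mul (A := A) hQ
  have htrace := mul_sub_re_trace_le hQ hA (posSemidef_psdSqrt hBB).isHermitian
    (posSemidef_psdSqrt_sub_smul hBB (smin_le_sqrt_eigenvalues B))
  rw [trace_psdSqrt_conjTranspose_mul_self, Matrix.mul_assoc, ← hPB, hQtr, Complex.ofReal_re,
    Complex.ofReal_re] at htrace
  rw [sinThetaF, sum_sin_arccos_sv_sq hA]
  refine Real.sqrt_le_sqrt ((le_div_iff₀ (smin_pos hB)).mpr ?_)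
  nlinarith [smin_pos hB]

theorem sinTheta_le_eps_trNorm {n k : ℕ} (hkn : k ≤ n) (B P : Matrix (Fin n) (Fin k) ℂ)
    (hrank : B.rank = k) (hP : Pᴴ * P = 1) :
    sinThetaF P (polarFactor B) ≤
      Real.sqrt (2 * (trNorm B - trNorm (Pᴴ * B)) / smin B) :=
  sinTheta_le_eps_trNorm_general B P hrank hP
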